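/- Let w be a right-infinite word with p_w(n) ≤ Cn for all n ≥ 1. Then the poset Rec(w) has at most C minimal elements that are not periodic. -/

import Mathlib

/-!
For a recurrent word `v` that is not eventually periodic and a factor `y` of `v`, the number of
length-`n` factors of `v` containing `y` increases strictly with `n ≥ |y|`. Otherwise deleting
the last letter is a bijection from those of length `n + 1` onto those of length `n`; by
recurrence every length-`n` window of `v` then contains `y`, so each length-`n` window determines
the next letter, and by pigeonhole `v` is eventually periodic.

Distinct minimal elements of `Rec(w)` are incomparable, so representatives `v_i` of `C + 1` of
them have factors `y_i` with `y_i` not a factor of `v_j` for `j ≠ i`. The sets of length-`n`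
factors of `v_i` containing `y_i` are then pairwise disjoint sets of factors of `w` with at least
`n + 1 - |y_i|` elements each, which exceeds `C n` in total for large `n`.
-/

/-- The factor of `w` of length `n` starting at position `i`. -/
def factorAt {A : Type*} (w : ℕ → A) (i n : ℕ) : List A :=
  (List.range n).map (fun k => w (i + k))

/-- `u` is a (finite, contiguous) factor of the right-infinite word `w`. -/
def IsFactorOf {A : Type*} (u : List A) (w : ℕ → A) : Prop :=
  ∃ i, u = factorAt w i u.length

/-- The set of factors of `w`. -/
def Fac {A : Type*} (w : ℕ → A) : Set (List A) := {u | IsFactorOf u w}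

/-- `w` is recurrent: every factor occurs at arbitrarily large positions. -/
def Recurrent {A : Type*} (w : ℕ → A) : Prop :=
  ∀ u ∈ Fac w, ∀ N : ℕ, ∃ i ≥ N, u = factorAt w i u.length

/-- `w` is uniformly recurrent: each factor occurs in every sufficiently long factor. -/
def UniformlyRecurrent {A : Type*} (w : ℕ → A) : Prop :=
  ∀ u ∈ Fac w, ∃ N : ℕ, ∀ y ∈ Fac w, y.length = N → u <:+: y

/-- `w` is (purely) periodic. -/
def PeriodicWord {A : Type*} (w : ℕ → A) : Prop :=
  ∃ p ≥ 1, ∀ n, w (n + p) = w n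

/-- `w` is eventually periodic. -/
def EventuallyPeriodicWord {A : Type*} (w : ℕ → A) : Prop :=
  ∃ p ≥ 1, ∃ N, ∀ n ≥ N, w (n + p) = w n

/-- The factor complexity function of `w`. -/
noncomputable def cplx {A : Type*} (w : ℕ → A) (n : ℕ) : ℕ :=
  Set.ncard {u | u ∈ Fac w ∧ u.length = n}

/-- A set of finite words is factor-closed. -/
def FactorClosed {A : Type*} (S : Set (List A)) : Prop :=
  ∀ y ∈ S, ∀ u, u <:+: y → u ∈ S

/-- The radical of `w`. -/
def Rad {A : Type*} (w : ℕ → A) : Set (List A) :=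
  {z | z ∈ Fac w ∧ ∀ Y : Finset (List A),
    (∀ y ∈ Y, y ∈ Fac w ∧ z <:+: y) →
    ∃ N : ℕ, ∀ L : List (List A), L.length = N → (∀ y ∈ L, y ∈ Y) →
      L.flatten ∉ Fac w}

/-- The recurrent spectrum of `w`, with classes identified with their factor sets. -/
def RecSpec {A : Type*} (w : ℕ → A) : Set (Set (List A)) :=
  {F | ∃ v : ℕ → A, Recurrent v ∧ F = Fac v ∧ Fac v ⊆ Fac w}

section

variable {A : Type*}

@[simp] lemma length_factorAt (w : ℕ → A) (i n : ℕ) : (factorAt w i n).length = n := by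
  simp [factorAt]

lemma factorAt_mem_fac (w : ℕ → A) (i n : ℕ) : factorAt w i n ∈ Fac w :=
  ⟨i, by simp⟩

lemma factorAt_add (w : ℕ → A) (i a b : ℕ) :
    factorAt w i (a + b) = factorAt w i a ++ factorAt w (i + a) b := by
  simp [factorAt, List.range_add, Function.comp_def, add_assoc]

lemma factorAt_infix_factorAt {w : ℕ → A} {s n t l : ℕ} (h : t + l ≤ n) :
    factorAt w (s + t) l <:+: factorAt w s n := by
  refine ⟨factorAt w s t, factorAt w (s + t + l) (n - t - l), ?_⟩
  rw [← factorAt_add, add_assoc s t l, ← factorAt_add]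
  congr 1; omega

lemma infix_factorAt_iff {w : ℕ → A} {y : List A} {s n : ℕ} :
    y <:+: factorAt w s n ↔ ∃ t, t + y.length ≤ n ∧ y = factorAt w (s + t) y.length := by
  refine ⟨fun h => ?_, fun ⟨t, ht, hy⟩ => hy ▸ factorAt_infix_factorAt (by simpa using ht)⟩
  obtain ⟨t, ht, hget⟩ := List.infix_iff_getElem?.mp h
  refine ⟨t, by simpa [add_comm] using ht, List.ext_getElem (by simp) fun k hk _ => ?_⟩
  have hw := hget k hk
  rw [List.getElem?_eq_getElem (by simp at ht ⊢; omega)] at hw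
  simp only [factorAt, List.getElem_map, List.getElem_range, Option.some.injEq] at hw
  simp [factorAt, ← hw, Nat.add_comm k t, Nat.add_assoc]

lemma factorAt_succ (w : ℕ → A) (i n : ℕ) :
    factorAt w i (n + 1) = factorAt w i n ++ [w (i + n)] := by
  rw [factorAt_add]
  simp [factorAt]

lemma factorAt_succ' (w : ℕ → A) (i n : ℕ) :
    factorAt w i (n + 1) = w i :: factorAt w (i + 1) n := by
  rw [add_comm n, factorAt_add]
  simp [factorAt]

lemma take_factorAt (w : ℕ → A) {i n k : ℕ} (h : k ≤ n) :
    (factorAt w i n).take k = factorAt w i k := by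
  obtain ⟨b, rfl⟩ := Nat.exists_eq_add_of_le h
  rw [factorAt_add]
  exact List.take_left' (by simp)

lemma factorAt_shift (w : ℕ → A) (N i n : ℕ) :
    factorAt (fun k => w (N + k)) i n = factorAt w (N + i) n := by
  simp [factorAt, add_assoc]

lemma mem_fac_of_infix {w : ℕ → A} {u y : List A} (h : u <:+: y) (hy : y ∈ Fac w) :
    u ∈ Fac w := by
  obtain ⟨i, hi⟩ := hy
  rw [hi] at h
  obtain ⟨t, -, ht⟩ := infix_factorAt_iff.mp h
  exact ⟨i + t, ht⟩

lemma Recurrent.fac_shift {v : ℕ → A} (hv : Recurrent v) (N : ℕ) :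
    Fac (fun k => v (N + k)) = Fac v := by
  ext u
  constructor
  · rintro ⟨j, hj⟩
    exact ⟨N + j, by rwa [factorAt_shift] at hj⟩
  · intro hu
    obtain ⟨i, hi, hui⟩ := hv u hu N
    exact ⟨i - N, by rwa [factorAt_shift, Nat.add_sub_cancel' hi]⟩

lemma Recurrent.exists_periodicWord_fac_eq {v : ℕ → A} (hv : Recurrent v)
    (hp : EventuallyPeriodicWord v) : ∃ u : ℕ → A, PeriodicWord u ∧ Fac v = Fac u := by
  obtain ⟨p, hp1, N, hN⟩ := hp
  refine ⟨fun k => v (N + k), ⟨p, hp1, fun n => ?_⟩, (hv.fac_shift N).symm⟩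
  simpa [add_assoc] using hN (N + n) (by omega)

lemma eventuallyPeriodicWord_of_factorAt_determines_next [Finite A] {v : ℕ → A} {n : ℕ}
    (hdet : ∀ a b, factorAt v a n = factorAt v b n → v (a + n) = v (b + n)) :
    EventuallyPeriodicWord v := by
  have hstep : ∀ a b, factorAt v a n = factorAt v b n →
      v a = v b ∧ factorAt v (a + 1) n = factorAt v (b + 1) n := by
    intro a b hab
    have h := factorAt_succ v a n
    rw [hab, hdet a b hab, ← factorAt_succ, factorAt_succ', factorAt_succ'] at h
    exact List.cons.inj h
  obtain ⟨a, -, b, -, hne, hab⟩ := Set.infinite_univ.exists_ne_map_eq_of_mapsTo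
    (f := fun j => factorAt v j n) (fun j _ => length_factorAt v j n) (List.finite_length_eq A n)
  wlog hlt : a < b generalizing a b
  · exact this b a hne.symm hab.symm (by omega)
  have hshift : ∀ k, factorAt v (a + k) n = factorAt v (b + k) n := by
    intro k
    induction k with
    | zero => exact hab
    | succ k ih => exact (hstep _ _ ih).2
  refine ⟨b - a, by omega, a, fun m hm => ?_⟩
  have := (hstep _ _ (hshift (m - a))).1
  rw [Nat.add_sub_cancel' hm] at this
  rw [this]
  congr 1
  omega

def factorsContaining (v : ℕ → A) (y : List A) (n : ℕ) : Set (List A) :=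
  {u | u ∈ Fac v ∧ u.length = n ∧ y <:+: u}

lemma finite_factorsContaining [Finite A] (v : ℕ → A) (y : List A) (n : ℕ) :
    (factorsContaining v y n).Finite :=
  (List.finite_length_eq A n).subset fun _ hu => hu.2.1

lemma factorAt_mem_factorsContaining {v : ℕ → A} {y : List A} {s n : ℕ}
    (h : y <:+: factorAt v s n) : factorAt v s n ∈ factorsContaining v y n :=
  ⟨factorAt_mem_fac v s n, length_factorAt v s n, h⟩

lemma infix_factorAt_succ {v : ℕ → A} {y : List A} {s n : ℕ} (h : y <:+: factorAt v s n) :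
    y <:+: factorAt v s (n + 1) :=
  h.trans (factorAt_succ v s n ▸ (List.prefix_append _ _).isInfix)

lemma factorsContaining_subset_image_take {v : ℕ → A} {y : List A} {n : ℕ} :
    factorsContaining v y n ⊆ List.take n '' factorsContaining v y (n + 1) := by
  rintro u ⟨⟨i, hi⟩, hlen, hyu⟩
  rw [hlen] at hi
  subst hi
  exact ⟨_, factorAt_mem_factorsContaining (infix_factorAt_succ hyu), take_factorAt v n.le_succ⟩

lemma Recurrent.infix_factorAt_of_infix_take {v : ℕ → A} (hv : Recurrent v) {y : List A}
    (hy : y ∈ Fac v) {n : ℕ} (hn : y.length ≤ n)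
    (htake : ∀ s, y <:+: factorAt v s (n + 1) → y <:+: factorAt v s n) (a : ℕ) :
    y <:+: factorAt v a n := by
  obtain ⟨i, hai, hi⟩ := hv y hy a
  induction i using Nat.strong_induction_on with
  | _ i ih =>
    by_cases hfit : i + y.length ≤ a + n
    · exact infix_factorAt_iff.mpr ⟨i - a, by omega, by rwa [Nat.add_sub_cancel' hai]⟩
    -- the `(n + 1)`-window ending with this occurrence has an earlier one in its first `n` letters
    set s := i + y.length - (n + 1)
    have hs : y <:+: factorAt v s (n + 1) :=
      infix_factorAt_iff.mpr ⟨i - s, by omega, by rwa [Nat.add_sub_cancel' (by omega)]⟩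
    obtain ⟨t, ht, hyt⟩ := infix_factorAt_iff.mp (htake s hs)
    exact ih (s + t) (by omega) (by omega) hyt

lemma apply_add_eq_of_injOn_take {v : ℕ → A} {y : List A} {n : ℕ}
    (hinj : Set.InjOn (List.take n) (factorsContaining v y (n + 1)))
    (hcover : ∀ a, y <:+: factorAt v a n) {a b : ℕ} (hab : factorAt v a n = factorAt v b n) :
    v (a + n) = v (b + n) := by
  have hmem c := factorAt_mem_factorsContaining (infix_factorAt_succ (hcover c))
  have h := hinj (hmem a) (hmem b) (by simp only [take_factorAt v n.le_succ, hab])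
  rw [factorAt_succ, factorAt_succ, hab] at h
  simpa using h

lemma ncard_factorsContaining_lt_succ [Finite A] {v : ℕ → A} (hv : Recurrent v)
    (hnp : ¬ EventuallyPeriodicWord v) {y : List A} (hy : y ∈ Fac v) {n : ℕ}
    (hn : y.length ≤ n) :
    (factorsContaining v y n).ncard < (factorsContaining v y (n + 1)).ncard := by
  by_contra! hle
  have hfin := finite_factorsContaining v y (n + 1)
  have himage := Set.ncard_image_le (f := List.take n) hfin
  have heq : factorsContaining v y n = List.take n '' factorsContaining v y (n + 1) :=
    Set.eq_of_subset_of_ncard_le factorsContaining_subset_image_take (by omega) (hfin.image _)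
  have hinj : Set.InjOn (List.take n) (factorsContaining v y (n + 1)) :=
    Set.injOn_of_ncard_image_eq (himage.antisymm (heq ▸ hle)) hfin
  refine hnp (eventuallyPeriodicWord_of_factorAt_determines_next fun a b hab =>
    apply_add_eq_of_injOn_take hinj (hv.infix_factorAt_of_infix_take hy hn fun s hs => ?_) hab)
  have := heq ▸ Set.mem_image_of_mem (List.take n) (factorAt_mem_factorsContaining hs)
  simpa [take_factorAt] using this.2.2

lemma le_ncard_factorsContaining [Finite A] {v : ℕ → A} (hv : Recurrent v)
    (hnp : ¬ EventuallyPeriodicWord v) {y : List A} (hy : y ∈ Fac v) {n : ℕ}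
    (hn : y.length ≤ n) : n + 1 - y.length ≤ (factorsContaining v y n).ncard := by
  induction n, hn using Nat.le_induction with
  | base =>
    have := (Set.ncard_pos (finite_factorsContaining v y _)).mpr ⟨y, hy, rfl, List.infix_refl y⟩
    omega
  | succ n hn ih =>
    have := ncard_factorsContaining_lt_succ hv hnp hy hn
    omega

lemma exists_mem_fac_forall_infix {ι : Type*} [Finite ι] {v : ℕ → A} {z : ι → List A}
    (hz : ∀ i, z i ∈ Fac v) : ∃ y ∈ Fac v, ∀ i, z i <:+: y := by
  choose p hp using hz
  obtain ⟨N, hN⟩ := (Set.finite_range fun i => p i + (z i).length).bddAbove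
  exact ⟨factorAt v 0 N, factorAt_mem_fac v 0 N, fun i =>
    infix_factorAt_iff.mpr ⟨p i, hN ⟨i, rfl⟩, by simpa using hp i⟩⟩

lemma exists_separating_factors {ι : Type*} [Finite ι] {V : ι → ℕ → A}
    (h : Pairwise fun i j => ¬ Fac (V i) ⊆ Fac (V j)) :
    ∃ Y : ι → List A, ∀ i, Y i ∈ Fac (V i) ∧ ∀ j ≠ i, Y i ∉ Fac (V j) := by
  choose z hz hz' using fun i (j : {j // j ≠ i}) => Set.not_subset.mp (h j.2.symm)
  choose Y hY hzY using fun i => exists_mem_fac_forall_infix (hz i)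
  exact ⟨Y, fun i => ⟨hY i, fun j hj hYj => hz' i ⟨j, hj⟩ (mem_fac_of_infix (hzY i _) hYj)⟩⟩

end

open Function in
lemma card_le_of_pairwise_disjoint_of_ncard_le {ι α : Type*} [Finite ι] {C : ℕ}
    {T : ℕ → Set α} {R : ι → ℕ → Set α} (hT : ∀ n ≥ 1, (T n).ncard ≤ C * n)
    (hTfin : ∀ n, (T n).Finite) (hRT : ∀ i n, R i n ⊆ T n)
    (hdisj : ∀ n, Pairwise (Disjoint on fun i => R i n))
    (hR : ∀ i, ∃ m, ∀ n ≥ m, n + 1 - m ≤ (R i n).ncard) : Nat.card ι ≤ C := by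
  cases nonempty_fintype ι
  choose m hm using hR
  obtain ⟨M, hM⟩ := (Set.finite_range m).bddAbove
  have hmM i : m i ≤ M := hM ⟨i, rfl⟩
  by_contra! hC
  set k := Nat.card ι
  -- each `R i n` then has at least `(k - 1) M + 2` elements, and `k ((k - 1) M + 2) > C n`
  set n := k * M + 1
  have hMn : M ≤ k * M := Nat.le_mul_of_pos_left M (by omega)
  have hcount : k * (n + 1 - M) ≤ C * n := calc
    k * (n + 1 - M) = ∑ _i : ι, (n + 1 - M) := by simp [k, Nat.card_eq_fintype_card]
    _ ≤ ∑ i, (R i n).ncard := Finset.sum_le_sum fun i _ =>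
      (Nat.sub_le_sub_left (hmM i) _).trans (hm i n (by have := hmM i; omega))
    _ = (⋃ i, R i n).ncard := by
      rw [Set.ncard_iUnion_of_finite (fun i => (hTfin n).subset (hRT i n)) (hdisj n),
        finsum_eq_sum_of_fintype]
    _ ≤ (T n).ncard := Set.ncard_le_ncard (Set.iUnion_subset fun i => hRT i n) (hTfin n)
    _ ≤ C * n := hT n (by omega)
  have hd : n + 1 - M + M = k * M + 2 := by omega
  generalize n + 1 - M = d at hcount hd
  have h1 := Nat.mul_le_mul_right d hC
  have h2 := Nat.mul_le_mul_right M hC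
  have h3 : C * (d + M) = C * (k * M + 2) := by rw [hd]
  simp only [n, Nat.succ_eq_add_one] at hcount h1 h2
  nlinarith

theorem card_aperiodic_minimal_le {A : Type*} [Finite A] (w : ℕ → A) (C : ℕ)
    (h : ∀ n ≥ 1, cplx w n ≤ C * n) :
    Set.ncard {F ∈ RecSpec w |
      (∀ G ∈ RecSpec w, F ⊆ G → F = G) ∧
      ¬ ∃ v : ℕ → A, PeriodicWord v ∧ F = Fac v} ≤ C := by
  set S := {F ∈ RecSpec w | (∀ G ∈ RecSpec w, F ⊆ G → F = G) ∧
    ¬ ∃ v : ℕ → A, PeriodicWord v ∧ F = Fac v}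
  rcases S.finite_or_infinite with hS | hS
  swap
  · simp [hS.ncard]
  have : Finite S := hS.to_subtype
  choose V hVrec hVfac hVw using fun F : S => F.2.1
  have haper (F : S) : ¬ EventuallyPeriodicWord (V F) := fun hp =>
    F.2.2.2 (by simpa [← hVfac F] using (hVrec F).exists_periodicWord_fac_eq hp)
  have hincomp : Pairwise fun F G : S => ¬ Fac (V F) ⊆ Fac (V G) := by
    intro F G hne hsub
    refine hne (Subtype.ext ?_)
    rw [F.2.2.1 _ ⟨V G, hVrec G, rfl, hVw G⟩ (hVfac F ▸ hsub), hVfac G]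
  obtain ⟨Y, hY⟩ := exists_separating_factors hincomp
  rw [← Nat.card_coe_set_eq]
  refine card_le_of_pairwise_disjoint_of_ncard_le
    (T := fun n => {u | u ∈ Fac w ∧ u.length = n}) (R := fun F => factorsContaining (V F) (Y F)) h
    (fun n => (List.finite_length_eq A n).subset fun _ hu => hu.2)
    (fun F n u hu => ⟨hVw F hu.1, hu.2.1⟩) (fun n F G hne => ?_)
    (fun F => ⟨(Y F).length, fun n => le_ncard_factorsContaining (hVrec F) (haper F) (hY F).1⟩)
  exact Set.disjoint_left.mpr fun u hF hG => (hY F).2 G hne.symm (mem_fac_of_infix hF.2.2 hG.1)
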